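/- (Masked rollout Q-value bound) Fix dynamics p, model p̃, policy π, and binary mask M : S × A → {0,1}. Define the masked transition: the rollout follows p̃ until the first time H at which M(s_H, a_H) = 0, after which it follows p. Let ε = max_{(s,a) : M(s,a)=1} D_TV[p(·|s,a), p̃(·|s,a)], and let w(t; s, a) = Pr[t < H | p̃, π, M, s_0 = s, a_0 = a] be the probability the rollout is still model-based at step t. If rewards satisfy |r| ≤ r_max, then for all (s,a): |Q^π(s,a) - Q̃^π_mask(s,a)| ≤ (2 r_max / (1-γ)) · ε · Σ_{t=0}^∞ γ^t w(t; s, a), where Q^π is the true discounted action-value and Q̃^π_mask is the discounted action-value of the masked rollout process. -/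

import Mathlib

/-- Total-variation distance between two pmfs on a finite type. -/
noncomputable def tv {X : Type*} [Fintype X] (f g : X → ℝ) : ℝ :=
  (1 / 2) * ∑ x, |f x - g x|

/-- State-action distribution at step `t` of the Markov chain induced by
dynamics `P` and policy `π`, started at the fixed state-action pair `sa0`. -/
noncomputable def plainDist {S A : Type*} [Fintype S] [Fintype A] [DecidableEq S] [DecidableEq A]
    (P : S × A → S → ℝ) (π : S → A → ℝ) (sa0 : S × A) : ℕ → S × A → ℝ
  | 0 => fun sa => if sa = sa0 then 1 else 0
  | t + 1 => fun sa => (∑ sa', P sa' sa.1 * plainDist P π sa0 t sa') * π sa.1 sa.2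

/-- Distribution at step `t` of the masked rollout process, on the augmented
space `(S × A) × Bool` where the flag records whether `t < H` (the rollout is
still model-based, i.e. all masks so far were `1`).  Transitions use the model
`Pm` while the flag is `true` and the true dynamics `P` afterwards; the new
flag is the old flag conjoined with the mask of the new state-action pair. -/
noncomputable def maskedDist {S A : Type*} [Fintype S] [Fintype A] [DecidableEq S] [DecidableEq A]
    (P Pm : S × A → S → ℝ) (π : S → A → ℝ) (M : S × A → Bool) (sa0 : S × A) :
    ℕ → (S × A) × Bool → ℝ
  | 0 => fun x => if x.1 = sa0 ∧ x.2 = M sa0 then 1 else 0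
  | t + 1 => fun x =>
      ∑ y : (S × A) × Bool,
        maskedDist P Pm π M sa0 t y *
        (if y.2 then Pm y.1 x.1.1 else P y.1 x.1.1) * π x.1.1 x.1.2 *
        (if x.2 = (y.2 && M x.1) then 1 else 0)

/-- `w(t; s, a)`: the probability that step `t` of the masked rollout is still
model-based (`t < H`). -/
noncomputable def wProb {S A : Type*} [Fintype S] [Fintype A] [DecidableEq S] [DecidableEq A]
    (P Pm : S × A → S → ℝ) (π : S → A → ℝ) (M : S × A → Bool) (sa0 : S × A)
    (t : ℕ) : ℝ :=
  ∑ sa : S × A, maskedDist P Pm π M sa0 t (sa, true)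

/-!
Write `μ_t` for the state-action law of the true rollout and `ν_t` for that of the masked
rollout with the flag `t < H` forgotten. A rollout step does not increase total variation,
and the masked step differs from the true one only on its model-based part, which has mass
`w(t)` and sits where the two kernels are `ε`-close; hence `D_TV(μ_t, ν_t) ≤ ε Σ_{k<t} w(k)`.
With `|r| ≤ r_max` the step-`t` reward gap is at most `2 r_max ε Σ_{k<t} w(k)`, and
`Σ_t γ^t Σ_{k<t} w(k) = γ/(1-γ) Σ_t γ^t w(t)`.
-/

section RolloutStep

variable {S A X : Type*} [Fintype X]

lemma tv_sub_left (f g h : X → ℝ) : tv (f - h) g = tv f (g + h) := by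
  unfold tv
  congr 1
  exact Finset.sum_congr rfl fun x _ => by
    rw [Pi.sub_apply, Pi.add_apply, sub_sub, add_comm (h x)]

lemma abs_sum_mul_sub_le_tv {r : X → ℝ} {rmax : ℝ} (hr : ∀ x, |r x| ≤ rmax) (f g : X → ℝ) :
    |∑ x, r x * f x - ∑ x, r x * g x| ≤ 2 * rmax * tv f g := by
  rw [← Finset.sum_sub_distrib, tv, ← mul_assoc, show 2 * rmax * (1 / 2) = rmax by ring,
    Finset.mul_sum]
  refine (Finset.abs_sum_le_sum_abs _ _).trans (Finset.sum_le_sum fun x _ => ?_)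
  rw [← mul_sub, abs_mul]
  exact mul_le_mul_of_nonneg_right (hr x) (abs_nonneg _)

lemma abs_sum_mul_le_of_sum_eq_one {r μ : X → ℝ} {rmax : ℝ} (hr : ∀ x, |r x| ≤ rmax)
    (hμ0 : ∀ x, 0 ≤ μ x) (hμ1 : ∑ x, μ x = 1) : |∑ x, r x * μ x| ≤ rmax :=
  calc |∑ x, r x * μ x| ≤ ∑ x, |r x| * μ x := by
        refine (Finset.abs_sum_le_sum_abs _ _).trans_eq (Finset.sum_congr rfl fun x _ => ?_)
        rw [abs_mul, abs_of_nonneg (hμ0 x)]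
    _ ≤ ∑ x, rmax * μ x :=
        Finset.sum_le_sum fun x _ => mul_le_mul_of_nonneg_right (hr x) (hμ0 x)
    _ = rmax := by rw [← Finset.mul_sum, hμ1, mul_one]

def rolloutStep (K : X → S → ℝ) (π : S → A → ℝ) (μ : X → ℝ) : S × A → ℝ :=
  fun sa => (∑ x, K x sa.1 * μ x) * π sa.1 sa.2

variable (K K' : X → S → ℝ) (π : S → A → ℝ) (μ ν : X → ℝ)

lemma rolloutStep_sub_right :
    rolloutStep K π (μ - ν) = rolloutStep K π μ - rolloutStep K π ν := by
  ext sa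
  simp only [rolloutStep, Pi.sub_apply, mul_sub, Finset.sum_sub_distrib, sub_mul]

lemma rolloutStep_sub_left :
    rolloutStep (K - K') π μ = rolloutStep K π μ - rolloutStep K' π μ := by
  ext sa
  simp only [rolloutStep, Pi.sub_apply, sub_mul, Finset.sum_sub_distrib]

variable {K K' π μ ν}

lemma rolloutStep_nonneg (hK0 : ∀ x s, 0 ≤ K x s) (hπ0 : ∀ s a, 0 ≤ π s a)
    (hμ0 : ∀ x, 0 ≤ μ x) (sa : S × A) : 0 ≤ rolloutStep K π μ sa :=
  mul_nonneg (Finset.sum_nonneg fun x _ => mul_nonneg (hK0 _ _) (hμ0 x)) (hπ0 _ _)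

variable [Fintype S] [Fintype A]

lemma sum_mul_policy (hπ1 : ∀ s, ∑ a, π s a = 1) (g : S → ℝ) :
    ∑ sa : S × A, g sa.1 * π sa.1 sa.2 = ∑ s, g s := by
  rw [Fintype.sum_prod_type]
  exact Finset.sum_congr rfl fun s _ => by dsimp only; rw [← Finset.mul_sum, hπ1, mul_one]

lemma sum_rolloutStep (hK1 : ∀ x, ∑ s, K x s = 1) (hπ1 : ∀ s, ∑ a, π s a = 1) :
    ∑ sa, rolloutStep K π μ sa = ∑ x, μ x := by
  unfold rolloutStep
  rw [sum_mul_policy hπ1 fun s => ∑ x, K x s * μ x, Finset.sum_comm]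
  exact Finset.sum_congr rfl fun x _ => by rw [← Finset.sum_mul, hK1, one_mul]

lemma sum_abs_rolloutStep_le (hπ0 : ∀ s a, 0 ≤ π s a) (hπ1 : ∀ s, ∑ a, π s a = 1) :
    ∑ sa, |rolloutStep K π μ sa| ≤ ∑ x, |μ x| * ∑ s, |K x s| :=
  calc ∑ sa, |rolloutStep K π μ sa| = ∑ s, |∑ x, K x s * μ x| := by
        simp only [rolloutStep, abs_mul, abs_of_nonneg (hπ0 _ _)]
        exact sum_mul_policy hπ1 fun s => |∑ x, K x s * μ x|
    _ ≤ ∑ s, ∑ x, |K x s| * |μ x| := Finset.sum_le_sum fun s _ =>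
        (Finset.abs_sum_le_sum_abs _ _).trans_eq (by simp only [abs_mul])
    _ = ∑ x, |μ x| * ∑ s, |K x s| := by
        rw [Finset.sum_comm]
        simp only [Finset.mul_sum, mul_comm]

lemma tv_rolloutStep_le (hK0 : ∀ x s, 0 ≤ K x s) (hK1 : ∀ x, ∑ s, K x s = 1)
    (hπ0 : ∀ s a, 0 ≤ π s a) (hπ1 : ∀ s, ∑ a, π s a = 1) :
    tv (rolloutStep K π μ) (rolloutStep K' π ν) ≤ tv μ ν + ∑ x, |ν x| * tv (K x) (K' x) := by
  have hsplit : rolloutStep K π μ - rolloutStep K' π ν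
      = rolloutStep K π (μ - ν) + rolloutStep (K - K') π ν := by
    rw [rolloutStep_sub_right, rolloutStep_sub_left]; abel
  have hK : ∀ x, ∑ s, |K x s| = 1 := fun x => by simp only [abs_of_nonneg (hK0 x _), hK1]
  calc tv (rolloutStep K π μ) (rolloutStep K' π ν)
      = 1 / 2 * ∑ sa, |(rolloutStep K π (μ - ν) + rolloutStep (K - K') π ν) sa| := by
        rw [← hsplit, tv]; rfl
    _ ≤ 1 / 2 * (∑ x, |(μ - ν) x| * ∑ s, |K x s|
          + ∑ x, |ν x| * ∑ s, |(K - K') x s|) := by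
        gcongr
        refine (Finset.sum_le_sum fun sa _ => abs_add_le _ _).trans ?_
        rw [Finset.sum_add_distrib]
        exact add_le_add (sum_abs_rolloutStep_le hπ0 hπ1) (sum_abs_rolloutStep_le hπ0 hπ1)
    _ = tv μ ν + ∑ x, |ν x| * tv (K x) (K' x) := by
        simp only [tv, hK, mul_one, Pi.sub_apply]
        rw [mul_add]
        congr 1
        rw [Finset.mul_sum]
        exact Finset.sum_congr rfl fun x _ => by ring

end RolloutStep

section MaskedRollout

variable {S A : Type*} [Fintype S] [Fintype A] [DecidableEq S] [DecidableEq A]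
  {P Pm : S × A → S → ℝ} {π : S → A → ℝ} {M : S × A → Bool} {sa0 : S × A}

variable (P Pm π M sa0) in
noncomputable def maskedMarginal (t : ℕ) (sa : S × A) : ℝ :=
  maskedDist P Pm π M sa0 t (sa, true) + maskedDist P Pm π M sa0 t (sa, false)

lemma plainDist_succ (t : ℕ) :
    plainDist P π sa0 (t + 1) = rolloutStep P π (plainDist P π sa0 t) := rfl

lemma plainDist_nonneg (hP0 : ∀ sa s', 0 ≤ P sa s') (hπ0 : ∀ s a, 0 ≤ π s a) :
    ∀ t sa, 0 ≤ plainDist P π sa0 t sa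
  | 0, sa => by simp only [plainDist]; split <;> norm_num
  | t + 1, sa => rolloutStep_nonneg hP0 hπ0 (plainDist_nonneg hP0 hπ0 t) sa

lemma sum_plainDist (hP1 : ∀ sa, ∑ s', P sa s' = 1) (hπ1 : ∀ s, ∑ a, π s a = 1) :
    ∀ t, ∑ sa, plainDist P π sa0 t sa = 1
  | 0 => by simp [plainDist]
  | t + 1 => by rw [plainDist_succ, sum_rolloutStep hP1 hπ1, sum_plainDist hP1 hπ1 t]

lemma maskedDist_nonneg (hP0 : ∀ sa s', 0 ≤ P sa s') (hPm0 : ∀ sa s', 0 ≤ Pm sa s')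
    (hπ0 : ∀ s a, 0 ≤ π s a) : ∀ t x, 0 ≤ maskedDist P Pm π M sa0 t x
  | 0, x => by simp only [maskedDist]; split <;> norm_num
  | t + 1, x => by
      simp only [maskedDist]
      refine Finset.sum_nonneg fun y _ => mul_nonneg (mul_nonneg (mul_nonneg
        (maskedDist_nonneg hP0 hPm0 hπ0 t y) ?_) (hπ0 _ _)) ?_
      · split
        · exact hPm0 _ _
        · exact hP0 _ _
      · split <;> norm_num

lemma maskedDist_true_eq_zero {sa : S × A} (hM : M sa = false) (t : ℕ) :
    maskedDist P Pm π M sa0 t (sa, true) = 0 := by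
  cases t with
  | zero => simp only [maskedDist]; grind
  | succ t => exact Finset.sum_eq_zero fun y _ => by simp [hM]

lemma maskedMarginal_zero : maskedMarginal P Pm π M sa0 0 = plainDist P π sa0 0 := by
  ext sa
  simp only [maskedMarginal, maskedDist, plainDist]
  by_cases h : sa = sa0 <;> cases M sa0 <;> simp [h]

lemma maskedMarginal_succ (t : ℕ) :
    maskedMarginal P Pm π M sa0 (t + 1)
      = rolloutStep Pm π (fun sa => maskedDist P Pm π M sa0 t (sa, true))
        + rolloutStep P π (fun sa => maskedDist P Pm π M sa0 t (sa, false)) := by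
  ext sa
  simp only [maskedMarginal, maskedDist, rolloutStep, Pi.add_apply, ← Finset.sum_add_distrib]
  have hflag : ∀ y : (S × A) × Bool,
      maskedDist P Pm π M sa0 t y * (if y.2 then Pm y.1 sa.1 else P y.1 sa.1) * π sa.1 sa.2 *
          (if true = (y.2 && M sa) then 1 else 0)
        + maskedDist P Pm π M sa0 t y * (if y.2 then Pm y.1 sa.1 else P y.1 sa.1) * π sa.1 sa.2 *
          (if false = (y.2 && M sa) then 1 else 0)
      = maskedDist P Pm π M sa0 t y * (if y.2 then Pm y.1 sa.1 else P y.1 sa.1) * π sa.1 sa.2 := by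
    intro y; cases y.2 && M sa <;> simp
  rw [Finset.sum_congr rfl fun y _ => hflag y, Fintype.sum_prod_type, Finset.sum_mul,
    Finset.sum_mul, ← Finset.sum_add_distrib]
  exact Finset.sum_congr rfl fun sa' _ => by
    rw [Fintype.sum_bool]; simp only [↓reduceIte, Bool.false_eq_true]; ring

lemma sum_mul_maskedDist (g : S × A → ℝ) (t : ℕ) :
    ∑ x : (S × A) × Bool, g x.1 * maskedDist P Pm π M sa0 t x
      = ∑ sa, g sa * maskedMarginal P Pm π M sa0 t sa := by
  rw [Fintype.sum_prod_type]
  exact Finset.sum_congr rfl fun sa _ => by rw [Fintype.sum_bool, maskedMarginal]; ring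

lemma maskedMarginal_nonneg (hP0 : ∀ sa s', 0 ≤ P sa s') (hPm0 : ∀ sa s', 0 ≤ Pm sa s')
    (hπ0 : ∀ s a, 0 ≤ π s a) (t : ℕ) (sa : S × A) : 0 ≤ maskedMarginal P Pm π M sa0 t sa :=
  add_nonneg (maskedDist_nonneg hP0 hPm0 hπ0 t _) (maskedDist_nonneg hP0 hPm0 hπ0 t _)

lemma sum_maskedMarginal (hP1 : ∀ sa, ∑ s', P sa s' = 1) (hPm1 : ∀ sa, ∑ s', Pm sa s' = 1)
    (hπ1 : ∀ s, ∑ a, π s a = 1) : ∀ t, ∑ sa, maskedMarginal P Pm π M sa0 t sa = 1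
  | 0 => by rw [maskedMarginal_zero, sum_plainDist hP1 hπ1]
  | t + 1 => by
      rw [maskedMarginal_succ, ← sum_maskedMarginal hP1 hPm1 hπ1 t]
      simp only [Pi.add_apply, Finset.sum_add_distrib, sum_rolloutStep hPm1 hπ1,
        sum_rolloutStep hP1 hπ1, maskedMarginal]

lemma wProb_nonneg (hP0 : ∀ sa s', 0 ≤ P sa s') (hPm0 : ∀ sa s', 0 ≤ Pm sa s')
    (hπ0 : ∀ s a, 0 ≤ π s a) (t : ℕ) : 0 ≤ wProb P Pm π M sa0 t :=
  Finset.sum_nonneg fun _ _ => maskedDist_nonneg hP0 hPm0 hπ0 t _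

lemma wProb_le_one (hP0 : ∀ sa s', 0 ≤ P sa s') (hPm0 : ∀ sa s', 0 ≤ Pm sa s')
    (hP1 : ∀ sa, ∑ s', P sa s' = 1) (hPm1 : ∀ sa, ∑ s', Pm sa s' = 1)
    (hπ0 : ∀ s a, 0 ≤ π s a) (hπ1 : ∀ s, ∑ a, π s a = 1) (t : ℕ) :
    wProb P Pm π M sa0 t ≤ 1 :=
  calc wProb P Pm π M sa0 t ≤ ∑ sa, maskedMarginal P Pm π M sa0 t sa :=
        Finset.sum_le_sum fun _ _ => le_add_of_nonneg_right (maskedDist_nonneg hP0 hPm0 hπ0 t _)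
    _ = 1 := sum_maskedMarginal hP1 hPm1 hπ1 t

lemma tv_plainDist_maskedMarginal_le (hP0 : ∀ sa s', 0 ≤ P sa s') (hPm0 : ∀ sa s', 0 ≤ Pm sa s')
    (hP1 : ∀ sa, ∑ s', P sa s' = 1) (hπ0 : ∀ s a, 0 ≤ π s a) (hπ1 : ∀ s, ∑ a, π s a = 1)
    {ε : ℝ} (hε : ∀ sa, M sa = true → tv (P sa) (Pm sa) ≤ ε) :
    ∀ t, tv (plainDist P π sa0 t) (maskedMarginal P Pm π M sa0 t)
      ≤ ε * ∑ k ∈ Finset.range t, wProb P Pm π M sa0 k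
  | 0 => by simp [maskedMarginal_zero, tv]
  | t + 1 => by
      set mT := fun sa => maskedDist P Pm π M sa0 t (sa, true)
      set mF := fun sa => maskedDist P Pm π M sa0 t (sa, false)
      have hmodel : ∑ sa, |mT sa| * tv (P sa) (Pm sa) ≤ ε * wProb P Pm π M sa0 t := by
        rw [wProb, Finset.mul_sum]
        refine Finset.sum_le_sum fun sa _ => ?_
        rw [abs_of_nonneg (maskedDist_nonneg hP0 hPm0 hπ0 t _), mul_comm ε]
        cases hM : M sa with
        | false => simp [maskedDist_true_eq_zero hM]
        | true => exact mul_le_mul_of_nonneg_left (hε sa hM) (maskedDist_nonneg hP0 hPm0 hπ0 t _)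
      calc tv (plainDist P π sa0 (t + 1)) (maskedMarginal P Pm π M sa0 (t + 1))
          = tv (rolloutStep P π (plainDist P π sa0 t - mF)) (rolloutStep Pm π mT) := by
            rw [maskedMarginal_succ, rolloutStep_sub_right, tv_sub_left, plainDist_succ]
        _ ≤ tv (plainDist P π sa0 t - mF) mT + ∑ sa, |mT sa| * tv (P sa) (Pm sa) :=
            tv_rolloutStep_le hP0 hP1 hπ0 hπ1
        _ ≤ ε * ∑ k ∈ Finset.range t, wProb P Pm π M sa0 k + ε * wProb P Pm π M sa0 t := by
            rw [tv_sub_left]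
            exact add_le_add (tv_plainDist_maskedMarginal_le hP0 hPm0 hP1 hπ0 hπ1 hε t) hmodel
        _ = ε * ∑ k ∈ Finset.range (t + 1), wProb P Pm π M sa0 k := by
            rw [Finset.sum_range_succ, mul_add]

end MaskedRollout

section DiscountedSums

variable {γ B : ℝ} {f : ℕ → ℝ}

lemma summable_pow_mul_of_abs_le (hγ0 : 0 ≤ γ) (hγ1 : γ < 1) (hf : ∀ t, |f t| ≤ B) :
    Summable fun t => γ ^ t * f t :=
  Summable.of_norm_bounded ((summable_geometric_of_lt_one hγ0 hγ1).mul_right B) fun t => by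
    rw [Real.norm_eq_abs, abs_mul, abs_of_nonneg (pow_nonneg hγ0 t)]
    exact mul_le_mul_of_nonneg_left (hf t) (pow_nonneg hγ0 t)

lemma summable_pow_mul_sum_range_of_abs_le (hγ0 : 0 ≤ γ) (hγ1 : γ < 1) (hf : ∀ t, |f t| ≤ B) :
    Summable fun t => γ ^ t * ∑ k ∈ Finset.range t, f k := by
  have hγ : ‖γ‖ < 1 := by rwa [Real.norm_eq_abs, abs_of_nonneg hγ0]
  refine Summable.of_norm_bounded ((summable_pow_mul_geometric_of_norm_lt_one 1 hγ).mul_left B)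
    fun t => ?_
  rw [Real.norm_eq_abs, abs_mul, abs_of_nonneg (pow_nonneg hγ0 t)]
  calc γ ^ t * |∑ k ∈ Finset.range t, f k| ≤ γ ^ t * ∑ _k ∈ Finset.range t, B := by
        gcongr
        exact (Finset.abs_sum_le_sum_abs _ _).trans (Finset.sum_le_sum fun k _ => hf k)
    _ = B * ((t : ℝ) ^ 1 * γ ^ t) := by
        simp only [Finset.sum_const, Finset.card_range, nsmul_eq_mul]; ring

/-- Shifting the index gives `G = γ (G + W)` for the series `G` of partial sums. -/
lemma tsum_pow_mul_sum_range (hf : Summable fun t => γ ^ t * f t)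
    (hS : Summable fun t => γ ^ t * ∑ k ∈ Finset.range t, f k) :
    (1 - γ) * ∑' t, γ ^ t * ∑ k ∈ Finset.range t, f k = γ * ∑' t, γ ^ t * f t := by
  have hshift : ∑' t, γ ^ t * ∑ k ∈ Finset.range t, f k
      = γ * (∑' t, γ ^ t * ∑ k ∈ Finset.range t, f k + ∑' t, γ ^ t * f t) :=
    calc ∑' t, γ ^ t * ∑ k ∈ Finset.range t, f k
        = ∑' t, γ ^ (t + 1) * ∑ k ∈ Finset.range (t + 1), f k := by
          rw [hS.tsum_eq_zero_add]; simp
      _ = ∑' t, γ * (γ ^ t * ∑ k ∈ Finset.range t, f k + γ ^ t * f t) := by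
          congr 1; ext t; rw [Finset.sum_range_succ]; ring
      _ = _ := by rw [tsum_mul_left, hS.tsum_add hf]
  linear_combination hshift

lemma abs_tsum_pow_mul_sub_le {C : ℝ} {a b w : ℕ → ℝ} (hγ0 : 0 ≤ γ) (hγ1 : γ < 1)
    (ha : Summable fun t => γ ^ t * a t) (hb : Summable fun t => γ ^ t * b t)
    (hw0 : ∀ t, 0 ≤ w t) (hw1 : ∀ t, w t ≤ 1) (hC : 0 ≤ C)
    (hab : ∀ t, |a t - b t| ≤ C * ∑ k ∈ Finset.range t, w k) :
    |∑' t, γ ^ t * a t - ∑' t, γ ^ t * b t| ≤ C / (1 - γ) * ∑' t, γ ^ t * w t := by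
  have hw1' : ∀ t, |w t| ≤ 1 := fun t => (abs_of_nonneg (hw0 t)).trans_le (hw1 t)
  have hw := summable_pow_mul_of_abs_le hγ0 hγ1 hw1'
  have hS := summable_pow_mul_sum_range_of_abs_le hγ0 hγ1 hw1'
  have hW0 : 0 ≤ ∑' t, γ ^ t * w t := tsum_nonneg fun t => mul_nonneg (pow_nonneg hγ0 t) (hw0 t)
  have h1γ : 0 < 1 - γ := sub_pos.mpr hγ1
  have hd : Summable fun t => |γ ^ t * a t - γ ^ t * b t| := (ha.sub hb).abs
  calc |∑' t, γ ^ t * a t - ∑' t, γ ^ t * b t|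
      ≤ ∑' t, |γ ^ t * a t - γ ^ t * b t| := by
        rw [← ha.tsum_sub hb]
        simpa only [Real.norm_eq_abs] using
          norm_tsum_le_tsum_norm (f := fun t => γ ^ t * a t - γ ^ t * b t)
            (by simpa only [Real.norm_eq_abs] using hd)
    _ ≤ ∑' t, C * (γ ^ t * ∑ k ∈ Finset.range t, w k) := by
        refine hd.tsum_le_tsum (fun t => ?_) (hS.mul_left C)
        rw [← mul_sub, abs_mul, abs_of_nonneg (pow_nonneg hγ0 t), mul_left_comm]
        exact mul_le_mul_of_nonneg_left (hab t) (pow_nonneg hγ0 t)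
    _ = C * (γ / (1 - γ) * ∑' t, γ ^ t * w t) := by
        rw [tsum_mul_left, div_mul_eq_mul_div, ← tsum_pow_mul_sum_range hw hS,
          mul_div_cancel_left₀ _ h1γ.ne']
    _ ≤ C * (1 / (1 - γ) * ∑' t, γ ^ t * w t) := by gcongr
    _ = C / (1 - γ) * ∑' t, γ ^ t * w t := by ring

end DiscountedSums

/-- Masked rollout Q-value bound:
`|Q^π(s,a) - Q̃^π_mask(s,a)| ≤ (2 r_max/(1-γ)) ε Σ_t γ^t w(t;s,a)`. -/
theorem stmt_9 {S A : Type*} [Fintype S] [Fintype A] [DecidableEq S] [DecidableEq A]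
    (P Pm : S × A → S → ℝ) (π : S → A → ℝ) (M : S × A → Bool)
    (hP0 : ∀ sa s', 0 ≤ P sa s') (hPm0 : ∀ sa s', 0 ≤ Pm sa s')
    (hP1 : ∀ sa, ∑ s', P sa s' = 1) (hPm1 : ∀ sa, ∑ s', Pm sa s' = 1)
    (hπ0 : ∀ s a, 0 ≤ π s a) (hπ1 : ∀ s, ∑ a, π s a = 1)
    (r : S × A → ℝ) (rmax : ℝ) (hr : ∀ sa, |r sa| ≤ rmax)
    (γ : ℝ) (hγ : γ ∈ Set.Ioo (0 : ℝ) 1)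
    (ε : ℝ) (hε0 : 0 ≤ ε)
    (hε : ∀ sa, M sa = true → tv (P sa) (Pm sa) ≤ ε)
    (sa0 : S × A) :
    |(∑' t : ℕ, γ ^ t * ∑ sa, r sa * plainDist P π sa0 t sa)
        - (∑' t : ℕ, γ ^ t * ∑ x : (S × A) × Bool,
            r x.1 * maskedDist P Pm π M sa0 t x)|
      ≤ (2 * rmax / (1 - γ)) * ε * ∑' t : ℕ, γ ^ t * wProb P Pm π M sa0 t := by
  obtain ⟨hγ0, hγ1⟩ := hγ
  have hrmax : 0 ≤ rmax := (abs_nonneg _).trans (hr sa0)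
  simp only [sum_mul_maskedDist]
  have hdiff : ∀ t, |∑ sa, r sa * plainDist P π sa0 t sa
      - ∑ sa, r sa * maskedMarginal P Pm π M sa0 t sa|
        ≤ 2 * rmax * ε * ∑ k ∈ Finset.range t, wProb P Pm π M sa0 k := fun t =>
    calc _ ≤ 2 * rmax * tv (plainDist P π sa0 t) (maskedMarginal P Pm π M sa0 t) :=
          abs_sum_mul_sub_le_tv hr _ _
      _ ≤ 2 * rmax * (ε * ∑ k ∈ Finset.range t, wProb P Pm π M sa0 k) :=
          mul_le_mul_of_nonneg_left
            (tv_plainDist_maskedMarginal_le hP0 hPm0 hP1 hπ0 hπ1 hε t) (by positivity)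
      _ = _ := by ring
  have hbound := abs_tsum_pow_mul_sub_le hγ0.le hγ1
    (summable_pow_mul_of_abs_le hγ0.le hγ1 fun t =>
      abs_sum_mul_le_of_sum_eq_one hr (plainDist_nonneg hP0 hπ0 t) (sum_plainDist hP1 hπ1 t))
    (summable_pow_mul_of_abs_le hγ0.le hγ1 fun t =>
      abs_sum_mul_le_of_sum_eq_one hr (maskedMarginal_nonneg hP0 hPm0 hπ0 t)
        (sum_maskedMarginal hP1 hPm1 hπ1 t))
    (wProb_nonneg hP0 hPm0 hπ0) (wProb_le_one hP0 hPm0 hP1 hPm1 hπ0 hπ1) (by positivity) hdiff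
  convert hbound using 1
  ring
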